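/- arXiv:2103.06570 — 3 statements merged into one kernel-verified Lean document; each statement's English description precedes it below -/
import Mathlib

section
/- With w = (m, m−1, …, 2, 1̄)(n, n−1, …, m+1 overlined) in W = G(2,2,n) and t the transposition (i,j) with 1 ≤ i ≤ m < j ≤ n, the product w·t is represented by the single cycle (n, n−1, …, j+1, i, i−1, …, 1̄, m, m−1, …, i+1, j, j−1, …, m+1 overlined); in particular ℓ_T(w·t) = n − 1 = ℓ_T(w) − 1. -/
open Matrix BigOperators

/-- The reflection of `G(2,2,n)` exchanging `e_i` and `e_j` (1-based indices `i, j`)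
with sign `ε`: it sends `e_i ↦ ε • e_j`, `e_j ↦ ε • e_i` and fixes the other basis vectors. -/
def reflMat (n i j : ℕ) (ε : ℝ) : Matrix (Fin n) (Fin n) ℝ :=
  Matrix.of fun k l =>
    if ((k : ℕ) + 1 = i ∧ (l : ℕ) + 1 = j) ∨ ((k : ℕ) + 1 = j ∧ (l : ℕ) + 1 = i) then ε
    else if k = l ∧ (k : ℕ) + 1 ≠ i ∧ (k : ℕ) + 1 ≠ j then 1
    else 0

/-- The set of reflections of `G(2,2,n)`: the matrices `(i,j)` and `(ī,j̄)` for `1 ≤ i ≠ j ≤ n`. -/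
def ReflSet (n : ℕ) : Set (Matrix (Fin n) (Fin n) ℝ) :=
  {M | ∃ i j : ℕ, 1 ≤ i ∧ i < j ∧ j ≤ n ∧ (M = reflMat n i j 1 ∨ M = reflMat n i j (-1))}

/-- Reflection length: the minimal number of reflections whose product is `M`. -/
noncomputable def reflLen (n : ℕ) (M : Matrix (Fin n) (Fin n) ℝ) : ℕ :=
  sInf {k : ℕ | ∃ L : List (Matrix (Fin n) (Fin n) ℝ),
    L.length = k ∧ (∀ t ∈ L, t ∈ ReflSet n) ∧ L.prod = M}

/-- Membership in `W = G(2,2,n)`: monomial matrices with nonzero entries `±1` whose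
product is `1` (row `k` carries the entry `ε k` in column `σ k`). -/
def memD (n : ℕ) (M : Matrix (Fin n) (Fin n) ℝ) : Prop :=
  ∃ (σ : Equiv.Perm (Fin n)) (ε : Fin n → ℝ),
    (∀ i, ε i = 1 ∨ ε i = -1) ∧ (∏ i, ε i = 1) ∧
    ∀ k l, M k l = if σ k = l then ε k else 0

/-- The quasi-Coxeter element `w = (m, m-1, …, 2, 1̄)(n, n-1, …, m+1‾)` of `G(2,2,n)`. -/
def wQC (n m : ℕ) : Matrix (Fin n) (Fin n) ℝ :=
  Matrix.of fun k l =>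
    if (k : ℕ) = 0 ∧ (l : ℕ) + 1 = m then -1
    else if (k : ℕ) = m ∧ (l : ℕ) + 1 = n then -1
    else if (l : ℕ) + 1 = (k : ℕ) ∧ (k : ℕ) ≠ m then 1
    else 0

/-- The single marked cycle `(n, n-1, …, j+1, i, i-1, …, 1̄, m, m-1, …, i+1, j, j-1, …, m+1‾)`
of Equation (1), written as a monomial matrix. -/
def wCycleI (n m i j : ℕ) : Matrix (Fin n) (Fin n) ℝ :=
  Matrix.of fun k l =>
    if (k : ℕ) = 0 then (if (l : ℕ) + 1 = (if i = m then j else m) then -1 else 0)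
    else if (k : ℕ) = m then (if (l : ℕ) + 1 = (if j = n then i else n) then -1 else 0)
    else if (k : ℕ) < m then
      (if (l : ℕ) + 1 = (if (k : ℕ) = i then j else (k : ℕ)) then 1 else 0)
    else (if (l : ℕ) + 1 = (if (k : ℕ) = j then i else (k : ℕ)) then 1 else 0)

/-!
Each reflection `t` has `rank (t - 1) ≤ 1`, and `rank (A * B - 1) ≤ rank (A - 1) + rank (B - 1)`,
so `rank (M - 1)` is a lower bound for the reflection length of `M`. Since each of the two cycles
of `w` carries exactly one bar, `w` fixes no nonzero vector and `rank (w - 1) = n`; as `t² = 1`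
and `w = (w t) t`, also `rank (w t - 1) ≥ n - 1`. The matching upper bounds are explicit
factorizations, built from the fact that the transpositions `(a₀ a₁)(a₁ a₂)⋯(a_{k-1} a_k)` along
a list multiply to a `(k+1)`-cycle:
`w = (1, m+1)(1̄, m+1̄) · (cycle on 1, …, m) · (cycle on m+1, …, n)` and
`w t = (1̄, m+1̄) · (cycle on 1, …, i, j+1, …, n) · (cycle on i+1, …, j)`.
-/

/- A signed permutation matrix: row `r` has its only nonzero entry `ε r` in column `σ r`.
Indices are 0-based naturals, so that the 1-based index arithmetic of `reflMat`, `wQC` and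
`wCycleI` becomes plain `ℕ` arithmetic; only the values of `σ` and `ε` below `n` matter. -/
def signedPermMat (n : ℕ) (σ : ℕ → ℕ) (ε : ℕ → ℝ) : Matrix (Fin n) (Fin n) ℝ :=
  Matrix.of fun r c => if (c : ℕ) = σ r then ε r else 0

section SignedPermMat

variable {n : ℕ}

theorem signedPermMat_congr {σ τ : ℕ → ℕ} {ε δ : ℕ → ℝ} (hσ : ∀ r < n, σ r = τ r)
    (hε : ∀ r < n, ε r = δ r) : signedPermMat n σ ε = signedPermMat n τ δ := by
  ext r c
  simp only [signedPermMat, of_apply, hσ r r.isLt, hε r r.isLt]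

theorem signedPermMat_id : signedPermMat n id 1 = 1 := by
  ext r c
  simp only [signedPermMat, of_apply, one_apply, id, Pi.one_apply, Fin.ext_iff, eq_comm]

theorem signedPermMat_mul {σ : ℕ → ℕ} (hσ : ∀ r < n, σ r < n) (τ : ℕ → ℕ) (ε δ : ℕ → ℝ) :
    signedPermMat n σ ε * signedPermMat n τ δ =
      signedPermMat n (τ ∘ σ) (fun r => ε r * δ (σ r)) := by
  ext r c
  rw [mul_apply, Finset.sum_eq_single ⟨σ r, hσ r r.isLt⟩]
  · simp only [signedPermMat, of_apply, Function.comp, if_true]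
    split_ifs <;> simp
  · intro x _ hx
    have : (x : ℕ) ≠ σ r := fun h => hx (Fin.ext h)
    simp [signedPermMat, this]
  · simp

theorem signedPermMat_mulVec {σ : ℕ → ℕ} (hσ : ∀ r < n, σ r < n) (ε : ℕ → ℝ)
    (v : Fin n → ℝ) (r : Fin n) :
    (signedPermMat n σ ε *ᵥ v) r = ε r * v ⟨σ r, hσ r r.isLt⟩ := by
  rw [mulVec, dotProduct, Finset.sum_eq_single ⟨σ r, hσ r r.isLt⟩]
  · simp [signedPermMat]
  · intro x _ hx
    have : (x : ℕ) ≠ σ r := fun h => hx (Fin.ext h)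
    simp [signedPermMat, this]
  · simp

end SignedPermMat

theorem reflMat_succ_succ (n a b : ℕ) (ε : ℝ) :
    reflMat n (a + 1) (b + 1) ε =
      signedPermMat n (Equiv.swap a b) (fun r => if r = a ∨ r = b then ε else 1) := by
  ext r c
  simp only [reflMat, signedPermMat, of_apply, Equiv.swap_apply_def, Fin.ext_iff]
  split_ifs <;> first | rfl | omega

theorem swap_apply_lt {n a b : ℕ} (ha : a < n) (hb : b < n) {r : ℕ} (hr : r < n) :
    Equiv.swap a b r < n := by
  rw [Equiv.swap_apply_def]
  split_ifs <;> assumption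

namespace Matrix

variable {K ι : Type*} [Field K] [Fintype ι]

theorem rank_add_le (A B : Matrix ι ι K) : (A + B).rank ≤ A.rank + B.rank := by
  have hle : LinearMap.range (A + B).mulVecLin ≤
      LinearMap.range A.mulVecLin ⊔ LinearMap.range B.mulVecLin := by
    rintro x ⟨v, rfl⟩
    rw [mulVecLin_add]
    exact Submodule.add_mem_sup (LinearMap.mem_range_self _ v) (LinearMap.mem_range_self _ v)
  exact (Submodule.finrank_mono hle).trans (Submodule.finrank_add_le_finrank_add_finrank _ _)

theorem rank_mul_sub_one_le [DecidableEq ι] (A B : Matrix ι ι K) :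
    (A * B - 1).rank ≤ (A - 1).rank + (B - 1).rank := by
  have h : A * B - 1 = A * (B - 1) + (A - 1) := by
    rw [Matrix.mul_sub, mul_one]
    abel
  rw [h, add_comm (A - 1).rank]
  exact (rank_add_le _ _).trans (Nat.add_le_add_right (rank_mul_le_right _ _) _)

theorem rank_sub_one_eq_card_of_fixed_eq_zero [DecidableEq ι] (A : Matrix ι ι K)
    (h : ∀ v : ι → K, A *ᵥ v = v → v = 0) : (A - 1).rank = Fintype.card ι := by
  refine rank_of_isUnit _ ((isUnit_iff_isUnit_det _).2 (isUnit_iff_ne_zero.2 fun hdet => ?_))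
  obtain ⟨v, hv, hfix⟩ := exists_mulVec_eq_zero_iff.2 hdet
  rw [sub_mulVec, one_mulVec, sub_eq_zero] at hfix
  exact hv (h v hfix)

end Matrix

theorem rank_sub_one_le_one_of_mem_reflSet {n : ℕ} {t : Matrix (Fin n) (Fin n) ℝ}
    (ht : t ∈ ReflSet n) : (t - 1).rank ≤ 1 := by
  obtain ⟨i, j, -, hij, -, ht⟩ := ht
  suffices ∀ ε : ℝ, ε * ε = 1 → (reflMat n i j ε - 1).rank ≤ 1 by
    rcases ht with rfl | rfl
    exacts [this 1 (mul_one 1), this (-1) (by norm_num)]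
  intro ε hε
  have hvec : reflMat n i j ε - 1 = vecMulVec
      (fun k : Fin n => if (k : ℕ) + 1 = i then 1 else if (k : ℕ) + 1 = j then -ε else 0)
      (fun l : Fin n => if (l : ℕ) + 1 = i then -1 else if (l : ℕ) + 1 = j then ε else 0) := by
    ext r c
    simp only [Matrix.sub_apply, one_apply, reflMat, of_apply, vecMulVec_apply, Fin.ext_iff]
    split_ifs <;> first | omega | simp [hε]
  rw [hvec]
  exact rank_vecMulVec_le _ _

theorem rank_prod_sub_one_le_length {n : ℕ} (L : List (Matrix (Fin n) (Fin n) ℝ))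
    (hL : ∀ t ∈ L, t ∈ ReflSet n) : (L.prod - 1).rank ≤ L.length := by
  induction L with
  | nil => simp
  | cons t L ih =>
    rw [List.prod_cons, List.length_cons]
    have ht := rank_sub_one_le_one_of_mem_reflSet (hL t List.mem_cons_self)
    have := ih fun s hs => hL s (List.mem_cons_of_mem t hs)
    have := rank_mul_sub_one_le t L.prod
    omega

theorem reflLen_eq_length_of_le_rank {n : ℕ} (M : Matrix (Fin n) (Fin n) ℝ)
    (L : List (Matrix (Fin n) (Fin n) ℝ)) (hL : ∀ t ∈ L, t ∈ ReflSet n) (hprod : L.prod = M)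
    (hrank : L.length ≤ (M - 1).rank) : reflLen n M = L.length := by
  refine le_antisymm (Nat.sInf_le ⟨L, rfl, hL, hprod⟩) (le_csInf ⟨_, L, rfl, hL, hprod⟩ ?_)
  rintro k ⟨L', rfl, hL', rfl⟩
  exact hrank.trans (rank_prod_sub_one_le_length L' hL')

theorem mul_self_eq_one_of_mem_reflSet {n : ℕ} {t : Matrix (Fin n) (Fin n) ℝ}
    (ht : t ∈ ReflSet n) : t * t = 1 := by
  obtain ⟨i, j, hi, hij, hjn, ht⟩ := ht
  obtain ⟨a, rfl⟩ : ∃ a, i = a + 1 := ⟨i - 1, by omega⟩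
  obtain ⟨b, rfl⟩ : ∃ b, j = b + 1 := ⟨j - 1, by omega⟩
  have hswap : ∀ c < n, Equiv.swap a b c < n := fun c => swap_apply_lt (by omega) (by omega)
  rw [← signedPermMat_id]
  rcases ht with rfl | rfl <;>
  · rw [reflMat_succ_succ, signedPermMat_mul hswap]
    refine signedPermMat_congr (fun c _ => Equiv.swap_apply_self _ _ _) fun c _ => ?_
    simp only [Equiv.swap_apply_def, Pi.one_apply]
    split_ifs <;> first | omega | norm_num

open List in
theorem formPerm_map_range_apply {N : ℕ} {f : ℕ → ℕ} (hf : Set.InjOn f (Set.Iio N)) {k : ℕ}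
    (hk : k < N) : formPerm ((range N).map f) (f k) = f (if k + 1 = N then 0 else k + 1) := by
  have hnd : ((range N).map f).Nodup :=
    nodup_range.map_on fun a ha b hb => hf (by simpa using ha) (by simpa using hb)
  have h := formPerm_apply_getElem _ hnd k (by simpa using hk)
  simp only [getElem_map, getElem_range, length_map, length_range] at h
  rw [h]
  split_ifs with hN
  · rw [hN, Nat.mod_self]
  · rw [Nat.mod_eq_of_lt (by omega)]

open List in
theorem formPerm_range'_append_range'_apply {s p t q : ℕ} (hst : s + p ≤ t) (c : ℕ) :
    formPerm (range' s p ++ range' t q) c =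
      if s ≤ c ∧ c + 1 < s + p then c + 1
      else if s ≤ c ∧ c + 1 = s + p then (if q = 0 then s else t)
      else if t ≤ c ∧ c + 1 < t + q then c + 1
      else if t ≤ c ∧ c + 1 = t + q then (if p = 0 then t else s)
      else c := by
  set f : ℕ → ℕ := fun k => if k < p then s + k else t + (k - p) with hf
  have hlist : range' s p ++ range' t q = (range (p + q)).map f := by
    rw [range_add, map_append, List.map_map, range'_eq_map_range, range'_eq_map_range]
    congr 1 <;> refine map_congr_left fun k hk => ?_ <;> simp only [mem_range] at hk <;>
      simp only [hf, Function.comp] <;> split_ifs <;> omega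
  have hinj : Set.InjOn f (Set.Iio (p + q)) := fun a _ b _ hab => by
    simp only [hf] at hab; split_ifs at hab <;> omega
  rw [hlist]
  by_cases hc : ∃ k < p + q, f k = c
  · obtain ⟨k, hk, rfl⟩ := hc
    rw [formPerm_map_range_apply hinj hk]
    simp only [hf]
    split_ifs <;> omega
  · rw [formPerm_apply_of_notMem (by simpa using hc)]
    push Not at hc
    have h₁ := hc (c - s)
    have h₂ := hc (c - t + p)
    simp only [hf] at h₁ h₂
    split_ifs at h₁ h₂ ⊢ <;> omega

theorem formPerm_range'_append_range'_inv_apply {s p t q : ℕ} (hst : s + p ≤ t) (c : ℕ) :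
    (List.formPerm (List.range' s p ++ List.range' t q))⁻¹ c =
      if s < c ∧ c < s + p then c - 1
      else if c = s ∧ 0 < p then (if q = 0 then s + p - 1 else t + q - 1)
      else if t < c ∧ c < t + q then c - 1
      else if c = t ∧ 0 < q then (if p = 0 then t + q - 1 else s + p - 1)
      else c := by
  rw [Equiv.Perm.inv_eq_iff_eq, formPerm_range'_append_range'_apply hst]
  split_ifs <;> omega

theorem formPerm_range'_inv_apply (s r c : ℕ) :
    (List.formPerm (List.range' s r))⁻¹ c =
      if s < c ∧ c < s + r then c - 1 else if c = s ∧ 0 < r then s + r - 1 else c := by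
  rw [← List.append_nil (List.range' s r), ← List.range'_zero (s := s + r),
    formPerm_range'_append_range'_inv_apply le_rfl]
  split_ifs <;> omega

theorem formPerm_inv_apply_lt {n : ℕ} {l : List ℕ} (hl : ∀ x ∈ l, x < n) {c : ℕ} (hc : c < n) :
    (l.formPerm)⁻¹ c < n := by
  rw [← List.formPerm_reverse]
  by_cases hcl : c ∈ l.reverse
  · exact hl _ (List.mem_reverse.1 (List.formPerm_apply_mem_of_mem hcl))
  · rwa [List.formPerm_apply_of_notMem hcl]

def cycleRefls (n : ℕ) (l : List ℕ) : List (Matrix (Fin n) (Fin n) ℝ) :=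
  List.zipWith (fun a b => reflMat n (a + 1) (b + 1) 1) l l.tail

section CycleRefls

variable {n : ℕ}

theorem length_cycleRefls (l : List ℕ) : (cycleRefls n l).length = l.length - 1 := by
  simp [cycleRefls]

theorem mem_reflSet_of_mem_cycleRefls {l : List ℕ} (hl : l.Pairwise (· < ·))
    (hn : ∀ x ∈ l, x < n) {t : Matrix (Fin n) (Fin n) ℝ} (ht : t ∈ cycleRefls n l) :
    t ∈ ReflSet n := by
  induction l with
  | nil => simp [cycleRefls] at ht
  | cons a l ih =>
    cases l with
    | nil => simp [cycleRefls] at ht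
    | cons b l =>
      rw [List.pairwise_cons] at hl
      simp only [cycleRefls, List.tail_cons, List.zipWith_cons_cons, List.mem_cons] at ht
      rcases ht with rfl | ht
      · exact ⟨a + 1, b + 1, by omega, by simpa using hl.1 b (by simp),
          hn b (by simp), Or.inl rfl⟩
      · exact ih hl.2 (fun x hx => hn x (List.mem_cons_of_mem a hx)) ht

theorem prod_cycleRefls {l : List ℕ} (hn : ∀ x ∈ l, x < n) :
    (cycleRefls n l).prod = signedPermMat n ⇑(l.formPerm)⁻¹ 1 := by
  induction l with
  | nil => simpa [cycleRefls] using signedPermMat_id.symm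
  | cons a l ih =>
    cases l with
    | nil => simpa [cycleRefls] using signedPermMat_id.symm
    | cons b l =>
      have ih := ih fun x hx => hn x (List.mem_cons_of_mem a hx)
      have hswap : ∀ r < n, Equiv.swap a b r < n := fun r =>
        swap_apply_lt (hn a (by simp)) (hn b (by simp))
      simp only [cycleRefls, List.tail_cons, List.zipWith_cons_cons, List.prod_cons] at ih ⊢
      rw [ih, reflMat_succ_succ, signedPermMat_mul hswap, List.formPerm_cons_cons,
        _root_.mul_inv_rev, Equiv.swap_inv]
      refine signedPermMat_congr (fun r _ => rfl) fun r _ => ?_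
      simp

end CycleRefls

theorem wQC_eq_signedPermMat {n m : ℕ} (hm : 1 ≤ m) :
    wQC n m = signedPermMat n (fun r => if r = 0 then m - 1 else if r = m then n - 1 else r - 1)
      (fun r => if r = 0 ∨ r = m then -1 else 1) := by
  ext r c
  have := c.isLt
  simp only [wQC, signedPermMat, of_apply]
  split_ifs <;> first | rfl | omega

theorem exists_reflSet_prod_eq_wQC {n m : ℕ} (hm : 1 ≤ m) (hmn : m < n) :
    ∃ L : List (Matrix (Fin n) (Fin n) ℝ),
      L.length = n ∧ (∀ t ∈ L, t ∈ ReflSet n) ∧ L.prod = wQC n m := by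
  have h₁ : ∀ x ∈ List.range' 0 m, x < n := fun x hx => by simp at hx; omega
  have h₂ : ∀ x ∈ List.range' m (n - m), x < n := fun x hx => by simp at hx; omega
  refine ⟨reflMat n 1 (m + 1) 1 :: reflMat n 1 (m + 1) (-1) ::
    (cycleRefls n (List.range' 0 m) ++ cycleRefls n (List.range' m (n - m))), ?_, ?_, ?_⟩
  · simp only [List.length_cons, List.length_append, length_cycleRefls, List.length_range']
    omega
  · simp only [List.mem_cons, List.mem_append]
    rintro t (rfl | rfl | ht | ht)
    · exact ⟨1, m + 1, le_rfl, by omega, hmn, Or.inl rfl⟩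
    · exact ⟨1, m + 1, le_rfl, by omega, hmn, Or.inr rfl⟩
    · exact mem_reflSet_of_mem_cycleRefls List.pairwise_lt_range' h₁ ht
    · exact mem_reflSet_of_mem_cycleRefls List.pairwise_lt_range' h₂ ht
  · have hswap : ∀ r < n, Equiv.swap 0 m r < n := fun r => swap_apply_lt (by omega) hmn
    rw [List.prod_cons, List.prod_cons, List.prod_append, prod_cycleRefls h₁, prod_cycleRefls h₂,
      signedPermMat_mul fun r => formPerm_inv_apply_lt h₁, reflMat_succ_succ n 0 m,
      reflMat_succ_succ n 0 m, signedPermMat_mul hswap, signedPermMat_mul hswap,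
      wQC_eq_signedPermMat hm]
    refine signedPermMat_congr (fun r hr => ?_) fun r hr => ?_
    · simp only [Function.comp, formPerm_range'_inv_apply, Equiv.swap_apply_self]
      split_ifs <;> omega
    · simp only [Equiv.swap_apply_def]
      split_ifs <;> first | omega | norm_num

theorem eq_zero_of_eq_pred_of_eq_neg {u : ℕ → ℝ} {a b : ℕ} (hab : a < b)
    (hstep : ∀ k, a < k → k < b → u k = u (k - 1)) (hwrap : u a = -u (b - 1)) :
    ∀ k, a ≤ k → k < b → u k = 0 := by
  have hconst : ∀ k, a ≤ k → k < b → u k = u a := by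
    intro k hak
    induction k, hak using Nat.le_induction with
    | base => intro _; rfl
    | succ k hak ih =>
      intro hk
      rw [hstep (k + 1) (by omega) hk, Nat.add_sub_cancel, ih (by omega)]
  have ha : u a = 0 := by
    rw [hconst (b - 1) (by omega) (by omega)] at hwrap
    linarith
  intro k hak hkb
  rw [hconst k hak hkb, ha]

/- Each of the two cycles of `w` carries one bar, so a fixed vector is constant along each cycle
and equal to minus itself. -/
theorem rank_wQC_sub_one {n m : ℕ} (hm : 1 ≤ m) (hmn : m < n) : (wQC n m - 1).rank = n := by
  rw [Matrix.rank_sub_one_eq_card_of_fixed_eq_zero, Fintype.card_fin]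
  intro v hv
  set u : ℕ → ℝ := fun k => if h : k < n then v ⟨k, h⟩ else 0 with hu
  have hmaps : ∀ r < n, (if r = 0 then m - 1 else if r = m then n - 1 else r - 1) < n :=
    fun r hr => by split_ifs <;> omega
  have hfix : ∀ r < n, u r = (if r = 0 ∨ r = m then -1 else 1) *
      u (if r = 0 then m - 1 else if r = m then n - 1 else r - 1) := by
    intro r hr
    have := congrFun hv ⟨r, hr⟩
    rw [wQC_eq_signedPermMat hm, signedPermMat_mulVec hmaps] at this
    simp only [hu, dif_pos hr, dif_pos (hmaps r hr)]
    exact this.symm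
  have h₁ := eq_zero_of_eq_pred_of_eq_neg (u := u) (by omega : 0 < m)
    (fun k hk hkm => by simpa [hk.ne', hkm.ne] using hfix k (by omega))
    (by simpa using hfix 0 (by omega))
  have hm0 : m ≠ 0 := by omega
  have h₂ := eq_zero_of_eq_pred_of_eq_neg (u := u) hmn
    (fun k hk hkn => by
      have hk0 : k ≠ 0 := by omega
      simpa [hk0, hk.ne'] using hfix k hkn)
    (by simpa [hm0] using hfix m hmn)
  funext r
  have hr := r.isLt
  have : u r = 0 := if h : (r : ℕ) < m then h₁ r (Nat.zero_le _) h else h₂ r (by omega) hr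
  simpa [hu, hr] using this

theorem wCycleI_eq_signedPermMat {n m i j : ℕ} (hi : 1 ≤ i) (him : i ≤ m) (hj : m < j) :
    wCycleI n m i j = signedPermMat n
      (fun r => if r = 0 then (if i = m then j else m) - 1
        else if r = m then (if j = n then i else n) - 1
        else if r < m then (if r = i then j else r) - 1
        else (if r = j then i else r) - 1)
      (fun r => if r = 0 ∨ r = m then -1 else 1) := by
  ext r c
  have := c.isLt
  simp only [wCycleI, signedPermMat, of_apply]
  split_ifs <;> first | rfl | omega

theorem wQC_mul_reflMat {n m i j : ℕ} (hi : 1 ≤ i) (him : i ≤ m) (hj : m < j) (hjn : j ≤ n) :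
    wQC n m * reflMat n i j 1 = wCycleI n m i j := by
  obtain ⟨a, rfl⟩ : ∃ a, i = a + 1 := ⟨i - 1, by omega⟩
  obtain ⟨b, rfl⟩ : ∃ b, j = b + 1 := ⟨j - 1, by omega⟩
  rw [wQC_eq_signedPermMat (by omega), reflMat_succ_succ,
    signedPermMat_mul fun r hr => by split_ifs <;> omega, wCycleI_eq_signedPermMat hi him hj]
  refine signedPermMat_congr (fun r hr => ?_) fun r hr => ?_
  · simp only [Function.comp, Equiv.swap_apply_def]
    split_ifs <;> omega
  · split_ifs <;> first | omega | norm_num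

theorem exists_reflSet_prod_eq_wCycleI {n m i j : ℕ} (hi : 1 ≤ i) (him : i ≤ m) (hj : m < j)
    (hjn : j ≤ n) :
    ∃ L : List (Matrix (Fin n) (Fin n) ℝ),
      L.length = n - 1 ∧ (∀ t ∈ L, t ∈ ReflSet n) ∧ L.prod = wCycleI n m i j := by
  have h₁ : ∀ x ∈ List.range' 0 i ++ List.range' j (n - j), x < n := fun x hx => by
    simp at hx; omega
  have h₂ : ∀ x ∈ List.range' i (j - i), x < n := fun x hx => by simp at hx; omega
  have hsorted : (List.range' 0 i ++ List.range' j (n - j)).Pairwise (· < ·) :=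
    List.pairwise_append.2 ⟨List.pairwise_lt_range', List.pairwise_lt_range',
      fun x hx y hy => by simp at hx hy; omega⟩
  refine ⟨reflMat n 1 (m + 1) (-1) :: (cycleRefls n (List.range' 0 i ++ List.range' j (n - j)) ++
    cycleRefls n (List.range' i (j - i))), ?_, ?_, ?_⟩
  · simp only [List.length_cons, List.length_append, length_cycleRefls, List.length_range']
    omega
  · simp only [List.mem_cons, List.mem_append]
    rintro t (rfl | ht | ht)
    · exact ⟨1, m + 1, le_rfl, by omega, by omega, Or.inr rfl⟩
    · exact mem_reflSet_of_mem_cycleRefls hsorted h₁ ht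
    · exact mem_reflSet_of_mem_cycleRefls List.pairwise_lt_range' h₂ ht
  · rw [List.prod_cons, List.prod_append, prod_cycleRefls h₁, prod_cycleRefls h₂,
      signedPermMat_mul fun r => formPerm_inv_apply_lt h₁, reflMat_succ_succ n 0 m,
      signedPermMat_mul fun r => swap_apply_lt (by omega) (by omega),
      wCycleI_eq_signedPermMat hi him hj]
    refine signedPermMat_congr (fun r hr => ?_) fun r hr => ?_
    · simp only [Function.comp]
      generalize hx : Equiv.swap 0 m r = x
      generalize hy : (List.range' 0 i ++ List.range' j (n - j)).formPerm⁻¹ x = y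
      rw [Equiv.swap_apply_def] at hx
      rw [formPerm_range'_append_range'_inv_apply (by omega)] at hy
      rw [formPerm_range'_inv_apply]
      split_ifs at hx <;> subst hx <;> split_ifs at hy <;> subst hy <;> split_ifs <;> omega
    · split_ifs <;> first | omega | norm_num

theorem quasiCoxeter_mul_transposition_general (n m i j : ℕ) (hi : 1 ≤ i) (him : i ≤ m)
    (hj : m + 1 ≤ j) (hjn : j ≤ n) :
    wQC n m * reflMat n i j 1 = wCycleI n m i j ∧
    reflLen n (wQC n m * reflMat n i j 1) = n - 1 ∧
    reflLen n (wQC n m) = n := by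
  have hm : 1 ≤ m := hi.trans him
  have hmn : m < n := by omega
  have hwt := wQC_mul_reflMat hi him hj hjn
  have ht : reflMat n i j 1 ∈ ReflSet n := ⟨i, j, hi, by omega, hjn, Or.inl rfl⟩
  obtain ⟨L, hlen, hL, hprod⟩ := exists_reflSet_prod_eq_wQC hm hmn
  obtain ⟨L', hlen', hL', hprod'⟩ := exists_reflSet_prod_eq_wCycleI hi him hj hjn
  refine ⟨hwt, ?_, ?_⟩
  · have hrank : n ≤ (wCycleI n m i j - 1).rank + 1 :=
      calc n = (wCycleI n m i j * reflMat n i j 1 - 1).rank := by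
            rw [← hwt, Matrix.mul_assoc, mul_self_eq_one_of_mem_reflSet ht, Matrix.mul_one,
              rank_wQC_sub_one hm hmn]
        _ ≤ (wCycleI n m i j - 1).rank + 1 :=
            (rank_mul_sub_one_le _ _).trans (Nat.add_le_add_left
              (rank_sub_one_le_one_of_mem_reflSet ht) _)
    rw [hwt, ← hlen', reflLen_eq_length_of_le_rank _ L' hL' hprod' (by omega)]
  · rw [reflLen_eq_length_of_le_rank _ L hL hprod (by rw [rank_wQC_sub_one hm hmn, hlen]), hlen]

/-- For the transposition `t = (i,j)` with `1 ≤ i ≤ m < j ≤ n`, the product `w · t` is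
represented by the single cycle of Equation (1); in particular
`ℓ_T(w·t) = n - 1 = ℓ_T(w) - 1`. -/
theorem quasiCoxeter_mul_transposition (n m i j : ℕ) (hn : 4 ≤ n) (hm : 1 ≤ m)
    (hm2 : m ≤ n / 2) (hi : 1 ≤ i) (him : i ≤ m) (hj : m + 1 ≤ j) (hjn : j ≤ n) :
    wQC n m * reflMat n i j 1 = wCycleI n m i j ∧
    reflLen n (wQC n m * reflMat n i j 1) = n - 1 ∧
    reflLen n (wQC n m) = n :=
  quasiCoxeter_mul_transposition_general n m i j hi him hj hjn
end

section
/- Let w ∈ W be a parabolic quasi-Coxeter element of a finite Coxeter group W. If w = t_1 ⋯ t_k is any reduced reflection decomposition of w, then the subgroup ⟨t_1, …, t_k⟩ is independent of the chosen reduced decomposition. -/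
/-- A single Hurwitz move on a list of reflections: replace an adjacent pair `(a, b)`
by `(a b a, a)`. -/
def HurwitzMove {G : Type*} [Group G] (L L' : List G) : Prop :=
  ∃ (l₁ l₂ : List G) (a b : G), L = l₁ ++ [a, b] ++ l₂ ∧ L' = l₁ ++ [a * b * a, a] ++ l₂

/-- Reflection length with respect to a generating set `T`. -/
noncomputable def ellT {G : Type*} [Group G] (T : Set G) (w : G) : ℕ :=
  sInf {k : ℕ | ∃ L : List G, L.length = k ∧ (∀ t ∈ L, t ∈ T) ∧ L.prod = w}

/-- `L` is a reduced reflection decomposition of `w`. -/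
def IsRedDec {G : Type*} [Group G] (T : Set G) (w : G) (L : List G) : Prop :=
  (∀ t ∈ L, t ∈ T) ∧ L.prod = w ∧ L.length = ellT T w

lemma hurwitzMove_closure {G : Type*} [Group G] {L L' : List G} (h : HurwitzMove L L') :
    Subgroup.closure {x | x ∈ L} = Subgroup.closure {x | x ∈ L'} := by
  obtain ⟨l₁, l₂, a, b, rfl, rfl⟩ := h
  apply le_antisymm <;> rw [Subgroup.closure_le] <;> intro x hx <;>
    simp only [Set.mem_setOf_eq, List.mem_append, List.mem_cons, List.mem_singleton,
      List.not_mem_nil, or_false] at hx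
  · rcases hx with (h1 | heq | heq) | h2
    · exact Subgroup.subset_closure (by simp [h1])
    · rw [heq]; exact Subgroup.subset_closure (by simp)
    · have ha : a ∈ Subgroup.closure {y | y ∈ l₁ ++ [a * b * a, a] ++ l₂} :=
        Subgroup.subset_closure (by simp)
      have hab : a * b * a ∈ Subgroup.closure {y | y ∈ l₁ ++ [a * b * a, a] ++ l₂} :=
        Subgroup.subset_closure (by simp)
      have key : a⁻¹ * (a * b * a) * a⁻¹ = b := by group
      have hm := mul_mem (mul_mem (inv_mem ha) hab) (inv_mem ha)
      rw [key] at hm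
      rw [heq]; exact hm
    · exact Subgroup.subset_closure (by simp [h2])
  · rcases hx with (h1 | heq | heq) | h2
    · exact Subgroup.subset_closure (by simp [h1])
    · have ha : a ∈ Subgroup.closure {y | y ∈ l₁ ++ [a, b] ++ l₂} :=
        Subgroup.subset_closure (by simp)
      have hb : b ∈ Subgroup.closure {y | y ∈ l₁ ++ [a, b] ++ l₂} :=
        Subgroup.subset_closure (by simp)
      rw [heq]
      exact mul_mem (mul_mem ha hb) ha
    · rw [heq]; exact Subgroup.subset_closure (by simp)
    · exact Subgroup.subset_closure (by simp [h2])

/-- If the Hurwitz action is transitive on the reduced reflection decompositions of `w`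
(the characterization of parabolic quasi-Coxeter elements), then the subgroup generated
by the reflections of a reduced decomposition of `w` does not depend on the chosen
reduced decomposition. -/
theorem closure_of_reduced_decomposition_independent {G : Type*} [Group G]
    (T : Set G) (hgen : Subgroup.closure T = ⊤)
    (hconj : ∀ t ∈ T, ∀ g : G, g * t * g⁻¹ ∈ T) (hsq : ∀ t ∈ T, t * t = 1)
    (w : G)
    (htrans : ∀ L L' : List G, IsRedDec T w L → IsRedDec T w L' →
      Relation.ReflTransGen (fun X Y => HurwitzMove X Y ∨ HurwitzMove Y X) L L')
    (L L' : List G) (hL : IsRedDec T w L) (hL' : IsRedDec T w L') :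
    Subgroup.closure {x | x ∈ L} = Subgroup.closure {x | x ∈ L'} := by
  have h := htrans L L' hL hL'
  clear hL hL'
  induction h with
  | refl => rfl
  | tail _ hstep ih =>
    rcases hstep with hm | hm
    · exact ih.trans (hurwitzMove_closure hm)
    · exact ih.trans (hurwitzMove_closure hm).symm
end

section
/- In W = G(2,2,n) with 1 ≤ m ≤ ⌊n/2⌋, s_1 = (m̄, m+1 overlined), s_i = (i−1,i), for 1 ≤ i ≤ m and m+1 ≤ j ≤ n the negative reflection (ī, j̄) (sending e_i ↦ −e_j, e_j ↦ −e_i) equals the conjugate s_1^{s_{m+2} s_{m+3} ⋯ s_j · s_m s_{m−1} ⋯ s_{i+1}}, i.e., (ī,j̄) = (s_{m+2}⋯s_j s_m⋯s_{i+1})⁻¹ s_1 (s_{m+2}⋯s_j s_m⋯s_{i+1}). -/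
open Matrix BigOperators

/-! Reflections of `G(2,2,n)` are signed permutation matrices, and `(x̄, z̄)` conjugated by the
transposition `(y, z)` is `(x̄, ȳ)`. So conjugation by `s_{m+2} ⋯ s_j` raises the second index of
`s_1 = (m̄, m+1‾)` one step at a time up to `j`, and conjugation by `s_m ⋯ s_{i+1}` then lowers the
first index from `m` to `i`; the conjugating element is invertible as a product of involutions. -/

open Equiv

section MonomialMatrix

variable {ι R : Type*} [Fintype ι] [DecidableEq ι] [Semiring R]

def monomialMatrix (σ : Perm ι) (f : ι → R) : Matrix ι ι R :=
  of fun k l => if σ k = l then f k else 0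

lemma monomialMatrix_mul (σ τ : Perm ι) (f g : ι → R) :
    monomialMatrix σ f * monomialMatrix τ g =
      monomialMatrix (σ.trans τ) (fun k => f k * g (σ k)) := by
  ext k l
  simp only [monomialMatrix, mul_apply, of_apply, trans_apply]
  rw [Finset.sum_eq_single (σ k)]
  · simp [mul_ite]; congr
  · intro p _ hp
    simp [Ne.symm hp]
  · simp

def signedSwapMatrix (a b : ι) (ε : R) : Matrix ι ι R :=
  monomialMatrix (swap a b) fun k => if k = a ∨ k = b then ε else 1

lemma signedSwapMatrix_one_mul_self (a b : ι) :
    signedSwapMatrix a b (1 : R) * signedSwapMatrix a b 1 = 1 := by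
  rw [signedSwapMatrix, monomialMatrix_mul]
  ext k l
  simp [monomialMatrix, one_apply]

lemma signedSwapMatrix_semiconjBy {x y z : ι} (hxy : x ≠ y) (hxz : x ≠ z) (hyz : y ≠ z)
    (ε : R) :
    SemiconjBy (signedSwapMatrix y z 1) (signedSwapMatrix x z ε) (signedSwapMatrix x y ε) := by
  simp only [SemiconjBy, signedSwapMatrix, monomialMatrix_mul]
  congr 1
  · ext k
    simp only [trans_apply, swap_apply_def]
    split_ifs <;> simp_all
  · funext k
    simp only [swap_apply_def]
    split_ifs <;> simp_all

end MonomialMatrix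

lemma reflMat_succ_eq_signedSwapMatrix {n : ℕ} (a b : Fin n) (ε : ℝ) :
    reflMat n (a + 1) (b + 1) ε = signedSwapMatrix a b ε := by
  ext k l
  simp only [reflMat, signedSwapMatrix, monomialMatrix, of_apply, swap_apply_def,
    Nat.add_right_cancel_iff, Fin.val_inj]
  split_ifs <;> simp_all [Fin.ext_iff]
  omega

lemma exists_fin_succ_eq {n x : ℕ} (hx : 1 ≤ x) (hxn : x ≤ n) : ∃ a : Fin n, x = a + 1 :=
  ⟨⟨x - 1, by omega⟩, by simp; omega⟩

lemma reflMat_one_mul_self {n x y : ℕ} (hx : 1 ≤ x) (hxn : x ≤ n) (hy : 1 ≤ y) (hyn : y ≤ n) :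
    reflMat n x y 1 * reflMat n x y 1 = 1 := by
  obtain ⟨a, rfl⟩ := exists_fin_succ_eq hx hxn
  obtain ⟨b, rfl⟩ := exists_fin_succ_eq hy hyn
  simp only [reflMat_succ_eq_signedSwapMatrix, signedSwapMatrix_one_mul_self]

lemma reflMat_semiconjBy {n x y z : ℕ} (hx : 1 ≤ x) (hxn : x ≤ n) (hy : 1 ≤ y) (hyn : y ≤ n)
    (hz : 1 ≤ z) (hzn : z ≤ n) (hxy : x ≠ y) (hxz : x ≠ z) (hyz : y ≠ z) (ε : ℝ) :
    SemiconjBy (reflMat n y z 1) (reflMat n x z ε) (reflMat n x y ε) := by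
  obtain ⟨a, rfl⟩ := exists_fin_succ_eq hx hxn
  obtain ⟨b, rfl⟩ := exists_fin_succ_eq hy hyn
  obtain ⟨c, rfl⟩ := exists_fin_succ_eq hz hzn
  simp only [reflMat_succ_eq_signedSwapMatrix]
  exact signedSwapMatrix_semiconjBy (by omega) (by omega) (by omega) ε

lemma reflMat_symm (n a b : ℕ) (ε : ℝ) : reflMat n a b ε = reflMat n b a ε := by
  ext k l
  simp only [reflMat, of_apply]
  split_ifs <;> tauto

lemma semiconjBy_prod_map_range {M : Type*} [Monoid M] (s r : ℕ → M) (d : ℕ)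
    (h : ∀ k < d, SemiconjBy (s k) (r (k + 1)) (r k)) :
    SemiconjBy ((List.range d).map s).prod (r d) (r 0) := by
  induction d with
  | zero => exact SemiconjBy.one_left _
  | succ d ih =>
    rw [List.range_succ, List.map_append, List.prod_append, List.map_singleton,
      List.prod_singleton]
    exact (ih fun k hk => h k (by omega)).mul_left (h d (by omega))

lemma isUnit_prod_map_range_reflMat {n : ℕ} (x y : ℕ → ℕ) (d : ℕ)
    (h : ∀ k < d, 1 ≤ x k ∧ x k ≤ n ∧ 1 ≤ y k ∧ y k ≤ n) :
    IsUnit ((List.range d).map fun k => reflMat n (x k) (y k) 1).prod := by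
  refine List.prod_isUnit fun t ht => ?_
  obtain ⟨k, hk, rfl⟩ := List.mem_map.mp ht
  obtain ⟨hx, hxn, hy, hyn⟩ := h k (List.mem_range.mp hk)
  exact IsUnit.of_mul_eq_one _ (reflMat_one_mul_self hx hxn hy hyn)

theorem negative_reflection_eq_conjugate_of_s1_general (n m i j : ℕ)
    (hi : 1 ≤ i) (him : i ≤ m) (hj : m + 1 ≤ j) (hjn : j ≤ n) :
    reflMat n i j (-1) =
      ((((List.range (j - (m + 1))).map (fun k => reflMat n (m + 1 + k) (m + 2 + k) 1)).prod) *
        (((List.range (m - i)).map (fun k => reflMat n (m - 1 - k) (m - k) 1)).prod))⁻¹ *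
      reflMat n m (m + 1) (-1) *
      ((((List.range (j - (m + 1))).map (fun k => reflMat n (m + 1 + k) (m + 2 + k) 1)).prod) *
        (((List.range (m - i)).map (fun k => reflMat n (m - 1 - k) (m - k) 1)).prod)) := by
  set A := ((List.range (j - (m + 1))).map fun k => reflMat n (m + 1 + k) (m + 2 + k) 1).prod
  set B := ((List.range (m - i)).map fun k => reflMat n (m - 1 - k) (m - k) 1).prod
  have hA : SemiconjBy A (reflMat n m j (-1)) (reflMat n m (m + 1) (-1)) := by
    have := semiconjBy_prod_map_range (fun k => reflMat n (m + 1 + k) (m + 2 + k) 1)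
      (fun k => reflMat n m (m + 1 + k) (-1)) (j - (m + 1)) fun k hk => by
        rw [show m + 1 + (k + 1) = m + 2 + k by omega]
        exact reflMat_semiconjBy (by omega) (by omega) (by omega) (by omega) (by omega)
          (by omega) (by omega) (by omega) (by omega) (-1)
    rwa [show m + 1 + (j - (m + 1)) = j by omega] at this
  have hB : SemiconjBy B (reflMat n i j (-1)) (reflMat n m j (-1)) := by
    have := semiconjBy_prod_map_range (fun k => reflMat n (m - 1 - k) (m - k) 1)
      (fun k => reflMat n (m - k) j (-1)) (m - i) fun k hk => by
        rw [show m - (k + 1) = m - 1 - k by omega, reflMat_symm n (m - 1 - k) (m - k),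
          reflMat_symm n (m - 1 - k) j, reflMat_symm n (m - k) j]
        exact reflMat_semiconjBy (by omega) (by omega) (by omega) (by omega) (by omega)
          (by omega) (by omega) (by omega) (by omega) (-1)
    rwa [show m - (m - i) = i by omega] at this
  have hAB : IsUnit (A * B).det := by
    rw [← isUnit_iff_isUnit_det]
    exact (isUnit_prod_map_range_reflMat _ _ _ fun k hk => by omega).mul
      (isUnit_prod_map_range_reflMat _ _ _ fun k hk => by omega)
  rw [mul_assoc, ← hA.mul_left hB, ← mul_assoc, nonsing_inv_mul _ hAB, one_mul]

/-- With `s_1 = (m̄, m+1‾)` and `s_i = (i-1, i)`, for `1 ≤ i ≤ m` and `m+1 ≤ j ≤ n`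
the negative reflection `(ī, j̄)` equals the conjugate
`(s_{m+2} ⋯ s_j · s_m ⋯ s_{i+1})⁻¹ · s_1 · (s_{m+2} ⋯ s_j · s_m ⋯ s_{i+1})`. -/
theorem negative_reflection_eq_conjugate_of_s1 (n m i j : ℕ)
    (hn : 4 ≤ n) (hm : 1 ≤ m) (hm2 : m ≤ n / 2)
    (hi : 1 ≤ i) (him : i ≤ m) (hj : m + 1 ≤ j) (hjn : j ≤ n) :
    reflMat n i j (-1) =
      ((((List.range (j - (m + 1))).map (fun k => reflMat n (m + 1 + k) (m + 2 + k) 1)).prod) *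
        (((List.range (m - i)).map (fun k => reflMat n (m - 1 - k) (m - k) 1)).prod))⁻¹ *
      reflMat n m (m + 1) (-1) *
      ((((List.range (j - (m + 1))).map (fun k => reflMat n (m + 1 + k) (m + 2 + k) 1)).prod) *
        (((List.range (m - i)).map (fun k => reflMat n (m - 1 - k) (m - k) 1)).prod)) :=
  negative_reflection_eq_conjugate_of_s1_general n m i j hi him hj hjn
end
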